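/- Let d ≥ 1, k ∈ ℕ, p ≥ 1, κ ≥ d. For every f ∈ B^{k,κ,p}(ℝ^d) and every ε > 0 there exists a C^k function g : ℝ^d → ℂ with compact support such that ‖f − g‖_{B^{k,κ,p}} ≤ ε. In other words, the compactly supported C^k functions are dense in B^{k,κ,p}. -/

import Mathlib

/-!
Cut `f` off smoothly: `g = χ(·/r) f` for a fixed bump `χ` equal to `1` on the unit ball.
The rescaled bumps have derivatives bounded uniformly in `r ≥ 1`, so by Leibniz
`|Dⁱ(f - g)| ≤ C Σ_{j ≤ k} |Dʲ f|`, while `f - g` vanishes on the ball of radius `r`.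
Since `κ ≥ d`, the weight `(1+R)^{-κ}` beats the volume factor `(1+R)^d` coming from covering a
ball of radius `R` by unit balls, so the `A^{κ,p}` norm is controlled by its radius-one term
`∫ sup_{|w| ≤ 1} |F(z+w)|^p dz`. For `F = Dⁱ(f - g)` that term is at most a constant times the
tail outside the ball of radius `r - 1` of an integrable function built from the `Dʲ f`, which
tends to `0` as `r → ∞`.
-/

open MeasureTheory
open scoped ENNReal NNReal

/-- `ℝ^d` as a Euclidean space. -/
abbrev E (d : ℕ) : Type := EuclideanSpace ℝ (Fin d)

/-- The `A^{κ,p}` norm: `sup_{R ≥ 0} (1+R)^{-κ/p} (∫ sup_{|z̄| ≤ R} ‖f(z+z̄)‖^p dz)^{1/p}`. -/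
noncomputable def Anorm {G F : Type*} [NormedAddCommGroup G] [MeasureSpace G]
    [NormedAddCommGroup F] (κ p : ℝ) (f : G → F) : ℝ≥0∞ :=
  ⨆ R : NNReal, (ENNReal.ofReal (1 + (R : ℝ))) ^ (-(κ / p)) *
    (∫⁻ z, ⨆ w ∈ Metric.closedBall (0 : G) (R : ℝ),
      ENNReal.ofReal (‖f (z + w)‖ ^ p)) ^ (1 / p)

/-- The `B^{k,κ,p}` norm: `(Σ_{i ≤ k} ‖D^i f‖_{A^{κ,p}}^p)^{1/p}`, where `D^i f` denotes
the `i`-th (Fréchet) derivative of `f`. -/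
noncomputable def Bnorm (d k : ℕ) (κ p : ℝ) (f : E d → ℂ) : ℝ≥0∞ :=
  (∑ i ∈ Finset.range (k + 1), Anorm κ p (iteratedFDeriv ℝ i f) ^ p) ^ (1 / p)

open Metric Filter Topology

section BallSup

variable {G : Type*} [NormedAddCommGroup G]

noncomputable def ballSup (u : G → ℝ≥0∞) (r : ℝ) (z : G) : ℝ≥0∞ :=
  ⨆ w ∈ closedBall (0 : G) r, u (z + w)

lemma Anorm_eq [MeasureSpace G] {F : Type*} [NormedAddCommGroup F] (κ p : ℝ) (f : G → F) :
    Anorm κ p f = ⨆ R : ℝ≥0, ENNReal.ofReal (1 + R) ^ (-(κ / p)) *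
      (∫⁻ z, ballSup (fun x => ENNReal.ofReal (‖f x‖ ^ p)) R z) ^ (1 / p) :=
  rfl

lemma le_ballSup (u : G → ℝ≥0∞) {r : ℝ} (z : G) {w : G} (hw : ‖w‖ ≤ r) :
    u (z + w) ≤ ballSup u r z :=
  le_biSup (fun w => u (z + w)) (mem_closedBall_zero_iff.2 hw)

lemma ballSup_le_iff {u : G → ℝ≥0∞} {r : ℝ} {z : G} {a : ℝ≥0∞} :
    ballSup u r z ≤ a ↔ ∀ w, ‖w‖ ≤ r → u (z + w) ≤ a := by
  simp [ballSup]

lemma ballSup_le_const_mul {u v : G → ℝ≥0∞} {c : ℝ≥0∞} (huv : ∀ x, u x ≤ c * v x) (r : ℝ)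
    (z : G) : ballSup u r z ≤ c * ballSup v r z :=
  ballSup_le_iff.2 fun w hw => (huv _).trans (by gcongr; exact le_ballSup v z hw)

lemma ballSup_sum_le {ι : Type*} (s : Finset ι) (u : ι → G → ℝ≥0∞) (r : ℝ) (z : G) :
    ballSup (fun x => ∑ i ∈ s, u i x) r z ≤ ∑ i ∈ s, ballSup (u i) r z :=
  ballSup_le_iff.2 fun _ hw => Finset.sum_le_sum fun i _ => le_ballSup (u i) z hw

lemma ballSup_eq_zero_of_forall_norm_le {u : G → ℝ≥0∞} {r R : ℝ}
    (hu : ∀ x, ‖x‖ ≤ R + r → u x = 0) {z : G} (hz : ‖z‖ ≤ R) : ballSup u r z = 0 :=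
  nonpos_iff_eq_zero.1 <| ballSup_le_iff.2 fun w hw =>
    (hu _ ((norm_add_le z w).trans (add_le_add hz hw))).le

lemma LowerSemicontinuous.ballSup {u : G → ℝ≥0∞} (hu : LowerSemicontinuous u) (r : ℝ) :
    LowerSemicontinuous (ballSup u r) :=
  lowerSemicontinuous_biSup fun w _ => hu.comp (continuous_add_const w)

lemma lintegral_ballSup_le_mul_setLIntegral_compl [MeasurableSpace G] (μ : Measure G)
    {u v : G → ℝ≥0∞} {c : ℝ≥0∞} (hc : c ≠ ∞) (huv : ∀ x, u x ≤ c * v x) {r R : ℝ}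
    (hu : ∀ x, ‖x‖ ≤ R + r → u x = 0) :
    ∫⁻ z, ballSup u r z ∂μ ≤ c * ∫⁻ z in (closedBall 0 R)ᶜ, ballSup v r z ∂μ := by
  have hsupp : Function.support (ballSup u r) ⊆ (closedBall 0 R)ᶜ := fun z hz hzR =>
    hz (ballSup_eq_zero_of_forall_norm_le hu (mem_closedBall_zero_iff.1 hzR))
  rw [← setLIntegral_eq_of_support_subset hsupp, ← lintegral_const_mul' _ _ hc]
  exact lintegral_mono fun z => ballSup_le_const_mul huv r z

end BallSup

section Covering

variable {G : Type*} [NormedAddCommGroup G] [MeasurableSpace G] [BorelSpace G] (μ : Measure G)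
  [μ.IsAddHaarMeasure]

lemma measure_closedBall_mul_ballSup_le (u : G → ℝ≥0∞) (R : ℝ) (z : G) :
    μ (closedBall 0 1) * ballSup u R z ≤
      ∫⁻ y in closedBall 0 (R + 1), ballSup u 1 (z + y) ∂μ := by
  simp only [ballSup, ENNReal.mul_iSup]
  refine iSup₂_le fun w hw => ?_
  have hw' : ‖w‖ ≤ R := mem_closedBall_zero_iff.1 hw
  calc μ (closedBall 0 1) * u (z + w) = ∫⁻ _ in closedBall w 1, u (z + w) ∂μ := by
        rw [setLIntegral_const, Measure.addHaar_closedBall_center μ w, mul_comm]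
    _ ≤ ∫⁻ y in closedBall w 1, ballSup u 1 (z + y) ∂μ := by
        refine setLIntegral_mono' measurableSet_closedBall fun y hy => ?_
        have hwy : ‖w - y‖ ≤ 1 := by rwa [← dist_eq_norm, dist_comm]
        simpa using le_ballSup u (z + y) hwy
    _ ≤ ∫⁻ y in closedBall 0 (R + 1), ballSup u 1 (z + y) ∂μ :=
        lintegral_mono_set (closedBall_subset_closedBall' (by simpa [add_comm] using hw'))

/-- Averaging the unit-ball suprema over the ball of radius `R + 1` dominates the supremum over
radius `R`; the volume of that ball gives the factor `(R + 1) ^ dim G`. -/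
lemma lintegral_ballSup_le [NormedSpace ℝ G] [FiniteDimensional ℝ G] {u : G → ℝ≥0∞}
    (hu : LowerSemicontinuous u) {R : ℝ} (hR : 0 ≤ R) :
    ∫⁻ z, ballSup u R z ∂μ ≤
      ENNReal.ofReal ((R + 1) ^ Module.finrank ℝ G) * ∫⁻ z, ballSup u 1 z ∂μ := by
  have hM : Measurable (ballSup u 1) := (hu.ballSup 1).measurable
  have hc0 : μ (closedBall 0 1) ≠ 0 := (measure_closedBall_pos μ 0 one_pos).ne'
  have hct : μ (closedBall 0 1) ≠ ∞ := measure_closedBall_lt_top.ne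
  rw [← ENNReal.mul_le_mul_iff_right hc0 hct]
  calc μ (closedBall 0 1) * ∫⁻ z, ballSup u R z ∂μ
      = ∫⁻ z, μ (closedBall 0 1) * ballSup u R z ∂μ := (lintegral_const_mul' _ _ hct).symm
    _ ≤ ∫⁻ z, ∫⁻ y in closedBall 0 (R + 1), ballSup u 1 (z + y) ∂μ ∂μ :=
        lintegral_mono (measure_closedBall_mul_ballSup_le μ u R)
    _ = ∫⁻ y in closedBall 0 (R + 1), ∫⁻ z, ballSup u 1 (z + y) ∂μ ∂μ :=
        lintegral_lintegral_swap (hM.comp measurable_add).aemeasurable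
    _ = ∫⁻ _ in closedBall 0 (R + 1), ∫⁻ z, ballSup u 1 z ∂μ ∂μ := by
        simp_rw [lintegral_add_right_eq_self]
    _ = μ (closedBall 0 1) *
          (ENNReal.ofReal ((R + 1) ^ Module.finrank ℝ G) * ∫⁻ z, ballSup u 1 z ∂μ) := by
        rw [setLIntegral_const, Measure.addHaar_closedBall' μ 0 (by linarith)]
        ring

end Covering

lemma tendsto_setLIntegral_compl_closedBall {α : Type*} [PseudoMetricSpace α] [MeasurableSpace α]
    [OpensMeasurableSpace α] {μ : Measure α} {f : α → ℝ≥0∞} (hf : AEMeasurable f μ)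
    (h : ∫⁻ a, f a ∂μ ≠ ∞) (x : α) :
    Tendsto (fun r : ℝ => ∫⁻ a in (closedBall x r)ᶜ, f a ∂μ) atTop (𝓝 0) := by
  simp_rw [← lintegral_indicator measurableSet_closedBall.compl]
  rw [← lintegral_zero]
  refine tendsto_lintegral_filter_of_dominated_convergence' f
    (.of_forall fun _ => hf.indicator measurableSet_closedBall.compl)
    (.of_forall fun _ => ae_of_all _ fun a => Set.indicator_le_self _ _ a) h
    (ae_of_all _ fun a => tendsto_const_nhds.congr' ?_)
  filter_upwards [eventually_ge_atTop (dist a x)] with r hr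
  exact (Set.indicator_of_notMem (Set.notMem_compl_iff.2 (mem_closedBall.2 hr)) _).symm

section Anorm

variable {G F : Type*} [NormedAddCommGroup G] [NormedAddCommGroup F] {κ p : ℝ}

lemma continuous_ofReal_norm_rpow {f : G → F} (hf : Continuous f) (hp : 0 ≤ p) :
    Continuous fun x => ENNReal.ofReal (‖f x‖ ^ p) :=
  ENNReal.continuous_ofReal.comp (hf.norm.rpow_const fun _ => Or.inr hp)

lemma lintegral_ballSup_lt_top_of_Anorm_lt_top [MeasureSpace G] (hp : 0 < p) {f : G → F}
    (hf : Anorm κ p f < ∞) (R : ℝ≥0) :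
    ∫⁻ z, ballSup (fun x => ENNReal.ofReal (‖f x‖ ^ p)) R z < ∞ := by
  rw [Anorm_eq] at hf
  have hR := (le_iSup _ R).trans_lt hf
  have hweight : ENNReal.ofReal (1 + R) ^ (-(κ / p)) ≠ 0 :=
    (ENNReal.rpow_pos (by simp [add_pos_of_pos_of_nonneg]) ENNReal.ofReal_ne_top).ne'
  exact (ENNReal.rpow_lt_top_iff_of_pos (one_div_pos.2 hp)).1
    (ENNReal.lt_top_of_mul_ne_top_right hR.ne hweight)

variable [NormedSpace ℝ G] [FiniteDimensional ℝ G] [MeasureSpace G] [BorelSpace G]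
  [(volume : Measure G).IsAddHaarMeasure]

lemma Anorm_rpow_le_lintegral_ballSup_one (hp : 0 < p) (hκ : (Module.finrank ℝ G : ℝ) ≤ κ)
    {f : G → F} (hf : Continuous f) :
    Anorm κ p f ^ p ≤ ∫⁻ z, ballSup (fun x => ENNReal.ofReal (‖f x‖ ^ p)) 1 z := by
  set u : G → ℝ≥0∞ := fun x => ENNReal.ofReal (‖f x‖ ^ p)
  have hu : LowerSemicontinuous u := (continuous_ofReal_norm_rpow hf hp.le).lowerSemicontinuous
  rw [← ENNReal.le_rpow_inv_iff hp, Anorm_eq]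
  refine iSup_le fun R => ?_
  have ha1 : 1 ≤ ENNReal.ofReal (1 + R) := ENNReal.one_le_ofReal.2 (by simp)
  have ha0 : ENNReal.ofReal (1 + R) ≠ 0 := (zero_lt_one.trans_le ha1).ne'
  have hcover : ∫⁻ z, ballSup u R z ≤ ENNReal.ofReal (1 + R) ^ κ * ∫⁻ z, ballSup u 1 z := by
    refine (lintegral_ballSup_le volume hu R.coe_nonneg).trans (mul_le_mul_left ?_ _)
    rw [add_comm (R : ℝ), ENNReal.ofReal_pow (by positivity), ← ENNReal.rpow_natCast]
    exact ENNReal.rpow_le_rpow_of_exponent_le ha1 hκ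
  calc ENNReal.ofReal (1 + R) ^ (-(κ / p)) * (∫⁻ z, ballSup u R z) ^ (1 / p)
      ≤ ENNReal.ofReal (1 + R) ^ (-(κ / p)) *
          (ENNReal.ofReal (1 + R) ^ κ * ∫⁻ z, ballSup u 1 z) ^ (1 / p) := by gcongr
    _ = (∫⁻ z, ballSup u 1 z) ^ p⁻¹ := by
        rw [ENNReal.mul_rpow_of_nonneg _ _ (by positivity), ← ENNReal.rpow_mul, ← mul_assoc,
          ← ENNReal.rpow_add _ _ ha0 ENNReal.ofReal_ne_top, mul_one_div, neg_add_cancel,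
          ENNReal.rpow_zero, one_mul, one_div]

lemma Anorm_rpow_le_mul_setLIntegral_compl (hp : 0 < p) (hκ : (Module.finrank ℝ G : ℝ) ≤ κ)
    {f : G → F} (hf : Continuous f) {S : G → ℝ} (hS : ∀ x, 0 ≤ S x) {C : ℝ≥0}
    (hfS : ∀ x, ‖f x‖ ≤ C * S x) {r : ℝ} (hf0 : ∀ x, ‖x‖ ≤ r + 1 → f x = 0) :
    Anorm κ p f ^ p ≤ ENNReal.ofReal (C ^ p) *
      ∫⁻ z in (closedBall 0 r)ᶜ, ballSup (fun x => ENNReal.ofReal (S x ^ p)) 1 z := by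
  refine (Anorm_rpow_le_lintegral_ballSup_one hp hκ hf).trans
    (lintegral_ballSup_le_mul_setLIntegral_compl volume ENNReal.ofReal_ne_top (fun x => ?_)
      fun x hx => by simp [hf0 x hx, Real.zero_rpow hp.ne'])
  rw [← ENNReal.ofReal_mul (by positivity), ← Real.mul_rpow C.coe_nonneg (hS x)]
  exact ENNReal.ofReal_le_ofReal (Real.rpow_le_rpow (norm_nonneg _) (hfS x) hp.le)

end Anorm

section Cutoff

variable {G F : Type*} [NormedAddCommGroup G] [NormedSpace ℝ G] [NormedAddCommGroup F]
  [NormedSpace ℝ F]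

lemma iteratedFDeriv_eq_zero_of_eqOn_zero {f : G → F} {s : Set G} (hs : IsOpen s)
    (hf : Set.EqOn f 0 s) {x : G} (hx : x ∈ s) (n : ℕ) : iteratedFDeriv ℝ n f x = 0 := by
  have hfx : f =ᶠ[𝓝 x] fun _ => 0 := eventually_of_mem (hs.mem_nhds hx) hf
  rw [(hfx.iteratedFDeriv ℝ n).eq_of_nhds, iteratedFDeriv_fun_zero, Pi.zero_apply]

lemma norm_iteratedFDeriv_comp_smul_le {φ : G → F} {j : ℕ} (hφ : ContDiff ℝ j φ) (t : ℝ)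
    (x : G) : ‖iteratedFDeriv ℝ j (fun y => φ (t • y)) x‖ ≤
      |t| ^ j * ‖iteratedFDeriv ℝ j φ (t • x)‖ := by
  have hL : ‖t • ContinuousLinearMap.id ℝ G‖ ≤ |t| :=
    (ContinuousLinearMap.opNorm_smul_le _ _).trans (mul_le_of_le_one_right (abs_nonneg t)
      ContinuousLinearMap.norm_id_le)
  rw [show (fun y => φ (t • y)) = φ ∘ (t • ContinuousLinearMap.id ℝ G) from rfl,
    ContinuousLinearMap.iteratedFDeriv_comp_right _ hφ x le_rfl, mul_comm]
  refine (ContinuousMultilinearMap.norm_compContinuousLinearMap_le _ _).trans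
    (mul_le_mul_of_nonneg_left ?_ (norm_nonneg _))
  simpa using Finset.prod_le_prod (s := Finset.univ) (g := fun _ : Fin j => |t|)
    (fun _ _ => norm_nonneg _) fun _ _ => hL

lemma exists_forall_norm_iteratedFDeriv_le {φ : G → F} {k : ℕ} (hφ : ContDiff ℝ k φ)
    (hc : HasCompactSupport φ) : ∃ C, ∀ j ≤ k, ∀ x, ‖iteratedFDeriv ℝ j φ x‖ ≤ C := by
  have hbdd : ∀ j ≤ k, ∃ C, ∀ x, ‖iteratedFDeriv ℝ j φ x‖ ≤ C := fun j hj => by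
    simpa using (hφ.continuous_iteratedFDeriv (mod_cast hj)).bounded_above_of_compact_support
      (hc.iteratedFDeriv j)
  choose! C hC using hbdd
  refine ⟨∑ j ∈ Finset.range (k + 1), C j, fun j hj x => (hC j hj x).trans ?_⟩
  exact Finset.single_le_sum (fun i hi => (norm_nonneg _).trans (hC i
    (Finset.mem_range_succ_iff.1 hi) 0)) (Finset.mem_range_succ_iff.2 hj)

lemma norm_iteratedFDeriv_smul_le_of_forall_le {φ : G → ℝ} {f : G → F} {k : ℕ}
    (hφ : ContDiff ℝ k φ) (hf : ContDiff ℝ k f) {C : ℝ}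
    (hC : ∀ j ≤ k, ∀ x, ‖iteratedFDeriv ℝ j φ x‖ ≤ C) {i : ℕ} (hi : i ≤ k) (x : G) :
    ‖iteratedFDeriv ℝ i (fun y => φ y • f y) x‖ ≤
      2 ^ i * C * ∑ j ∈ Finset.range (k + 1), ‖iteratedFDeriv ℝ j f x‖ := by
  set S := ∑ j ∈ Finset.range (k + 1), ‖iteratedFDeriv ℝ j f x‖
  have hS : ∀ j ≤ k, ‖iteratedFDeriv ℝ j f x‖ ≤ S := fun j hj =>
    Finset.single_le_sum (f := fun j => ‖iteratedFDeriv ℝ j f x‖) (fun _ _ => norm_nonneg _)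
      (Finset.mem_range_succ_iff.2 hj)
  have hC0 : 0 ≤ C := (norm_nonneg _).trans (hC 0 (Nat.zero_le k) x)
  calc ‖iteratedFDeriv ℝ i (fun y => φ y • f y) x‖
      ≤ ∑ j ∈ Finset.range (i + 1), (i.choose j : ℝ) * ‖iteratedFDeriv ℝ j φ x‖ *
          ‖iteratedFDeriv ℝ (i - j) f x‖ := norm_iteratedFDeriv_smul_le hφ hf x (mod_cast hi)
    _ ≤ ∑ j ∈ Finset.range (i + 1), (i.choose j : ℝ) * C * S := by
        gcongr with j hj
        · exact hC j ((Finset.mem_range_succ_iff.1 hj).trans hi) x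
        · exact hS _ ((Nat.sub_le i j).trans hi)
    _ = 2 ^ i * C * S := by
        rw [← Finset.sum_mul, ← Finset.sum_mul, ← Nat.cast_sum, Nat.sum_range_choose]
        push_cast
        ring

lemma eqOn_sub_smul_comp_smul_zero {φ : G → ℝ} (hφ : ∀ x, ‖x‖ ≤ 1 → φ x = 1) (f : G → F)
    {t : ℝ} (ht : 0 < t) : Set.EqOn (f - fun y => φ (t • y) • f y) 0 (ball 0 t⁻¹) := by
  intro y hy
  have hty : ‖t • y‖ ≤ 1 :=
    calc ‖t • y‖ = t * ‖y‖ := by rw [norm_smul, Real.norm_of_nonneg ht.le]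
      _ ≤ t * t⁻¹ := by gcongr; exact (mem_ball_zero_iff.1 hy).le
      _ = 1 := mul_inv_cancel₀ ht.ne'
  simp [hφ _ hty]

lemma exists_norm_iteratedFDeriv_sub_smul_comp_smul_le {φ : G → ℝ} {f : G → F} {k : ℕ}
    (hφ : ContDiff ℝ k φ) (hc : HasCompactSupport φ) (hf : ContDiff ℝ k f) :
    ∃ C : ℝ≥0, ∀ t : ℝ, |t| ≤ 1 → ∀ i ≤ k, ∀ x,
      ‖iteratedFDeriv ℝ i (f - fun y => φ (t • y) • f y) x‖ ≤
        C * ∑ j ∈ Finset.range (k + 1), ‖iteratedFDeriv ℝ j f x‖ := by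
  obtain ⟨C, hC⟩ := exists_forall_norm_iteratedFDeriv_le hφ hc
  have hC0 : 0 ≤ C := (norm_nonneg _).trans (hC 0 (Nat.zero_le k) 0)
  refine ⟨⟨1 + 2 ^ k * C, by positivity⟩, fun t ht i hi x => ?_⟩
  have hφt : ContDiff ℝ k fun y => φ (t • y) := hφ.comp (contDiff_const_smul t)
  have hg : ContDiff ℝ k fun y => φ (t • y) • f y := hφt.smul hf
  have hCt : ∀ j ≤ k, ∀ x, ‖iteratedFDeriv ℝ j (fun y => φ (t • y)) x‖ ≤ C := fun j hj x =>
    (norm_iteratedFDeriv_comp_smul_le (hφ.of_le (mod_cast hj)) t x).trans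
      (mul_le_of_le_one_left (norm_nonneg _) (pow_le_one₀ (abs_nonneg t) ht) |>.trans
        (hC j hj _))
  set S := ∑ j ∈ Finset.range (k + 1), ‖iteratedFDeriv ℝ j f x‖
  have hik : (i : WithTop ℕ∞) ≤ k := mod_cast hi
  calc ‖iteratedFDeriv ℝ i (f - fun y => φ (t • y) • f y) x‖
      ≤ ‖iteratedFDeriv ℝ i f x‖ + ‖iteratedFDeriv ℝ i (fun y => φ (t • y) • f y) x‖ := by
        rw [iteratedFDeriv_sub_apply (hf.contDiffAt.of_le hik)
          (hg.contDiffAt.of_le hik)]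
        exact norm_sub_le _ _
    _ ≤ S + 2 ^ k * C * S := by
        gcongr
        · exact Finset.single_le_sum (f := fun j => ‖iteratedFDeriv ℝ j f x‖)
            (fun _ _ => norm_nonneg _) (Finset.mem_range_succ_iff.2 hi)
        · exact (norm_iteratedFDeriv_smul_le_of_forall_le hφt hf hCt hi x).trans
            (by gcongr; exact one_le_two)
    _ = (1 + 2 ^ k * C) * S := by ring

lemma exists_cutoff_iteratedFDeriv_sub_le [FiniteDimensional ℝ G] {f : G → F} {k : ℕ}
    (hf : ContDiff ℝ k f) :
    ∃ C : ℝ≥0, ∀ r ≥ 1, ∃ g : G → F, ContDiff ℝ k g ∧ HasCompactSupport g ∧ ∀ i ≤ k, ∀ x,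
      ‖iteratedFDeriv ℝ i (f - g) x‖ ≤
          C * ∑ j ∈ Finset.range (k + 1), ‖iteratedFDeriv ℝ j f x‖ ∧
        (‖x‖ < r → iteratedFDeriv ℝ i (f - g) x = 0) := by
  let χ : ContDiffBump (0 : G) := ⟨1, 2, one_pos, one_lt_two⟩
  obtain ⟨C, hC⟩ :=
    exists_norm_iteratedFDeriv_sub_smul_comp_smul_le χ.contDiff χ.hasCompactSupport hf
  refine ⟨C, fun r hr => ?_⟩
  have hr0 : 0 < r⁻¹ := inv_pos.2 (zero_lt_one.trans_le hr)
  refine ⟨fun y => χ (r⁻¹ • y) • f y, (χ.contDiff.comp (contDiff_const_smul _)).smul hf,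
    (χ.hasCompactSupport.comp_smul hr0.ne').smul_right,
    fun i hi x => ⟨hC _ ?_ i hi x, fun hx => ?_⟩⟩
  · rw [abs_of_pos hr0]
    exact inv_le_one_of_one_le₀ hr
  · refine iteratedFDeriv_eq_zero_of_eqOn_zero isOpen_ball (eqOn_sub_smul_comp_smul_zero
      (fun y hy => χ.one_of_mem_closedBall (mem_closedBall_zero_iff.2 hy)) f hr0) ?_ i
    rwa [inv_inv, mem_ball_zero_iff]

end Cutoff

section Derivatives

variable {G F : Type*} [NormedAddCommGroup G] [NormedSpace ℝ G] [NormedAddCommGroup F]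
  [NormedSpace ℝ F] {κ p : ℝ}

lemma lintegral_ballSup_sum_norm_iteratedFDeriv_lt_top [MeasureSpace G] [OpensMeasurableSpace G]
    {f : G → F} {k : ℕ} (hp : 1 ≤ p) (hf : ContDiff ℝ k f)
    (hfin : ∀ i ≤ k, Anorm κ p (iteratedFDeriv ℝ i f) < ∞) (R : ℝ≥0) :
    ∫⁻ z, ballSup (fun x => ENNReal.ofReal
      ((∑ j ∈ Finset.range (k + 1), ‖iteratedFDeriv ℝ j f x‖) ^ p)) R z < ∞ := by
  have hp0 : 0 < p := zero_lt_one.trans_le hp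
  set u : ℕ → G → ℝ≥0∞ := fun j x => ENNReal.ofReal (‖iteratedFDeriv ℝ j f x‖ ^ p)
  set c := ENNReal.ofReal (((k : ℝ) + 1) ^ (p - 1))
  have hpow : ∀ x, ENNReal.ofReal ((∑ j ∈ Finset.range (k + 1), ‖iteratedFDeriv ℝ j f x‖) ^ p) ≤
      c * ∑ j ∈ Finset.range (k + 1), u j x := fun x => by
    rw [← ENNReal.ofReal_sum_of_nonneg fun _ _ => by positivity,
      ← ENNReal.ofReal_mul (by positivity)]
    refine ENNReal.ofReal_le_ofReal ?_
    simpa using Real.rpow_sum_le_const_mul_sum_rpow_of_nonneg (Finset.range (k + 1)) hp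
      fun j _ => norm_nonneg (iteratedFDeriv ℝ j f x)
  have hmeas : ∀ j ∈ Finset.range (k + 1), Measurable (ballSup (u j) R) := fun j hj =>
    ((continuous_ofReal_norm_rpow (hf.continuous_iteratedFDeriv
      (mod_cast Finset.mem_range_succ_iff.1 hj)) hp0.le).lowerSemicontinuous.ballSup
        R).measurable
  calc _ ≤ ∫⁻ z, c * ∑ j ∈ Finset.range (k + 1), ballSup (u j) R z :=
        lintegral_mono fun z => (ballSup_le_const_mul hpow R z).trans
          (by gcongr; exact ballSup_sum_le _ u R z)
    _ = c * ∑ j ∈ Finset.range (k + 1), ∫⁻ z, ballSup (u j) R z := by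
        rw [lintegral_const_mul' _ _ ENNReal.ofReal_ne_top, lintegral_finsetSum _ hmeas]
    _ < ∞ := ENNReal.mul_lt_top ENNReal.ofReal_lt_top <| ENNReal.sum_lt_top.2 fun j hj =>
        lintegral_ballSup_lt_top_of_Anorm_lt_top hp0
          (hfin j (Finset.mem_range_succ_iff.1 hj)) R

end Derivatives

lemma Bnorm_le_of_forall_le {d k : ℕ} {κ p : ℝ} (hp : 0 ≤ p) {f : E d → ℂ} {M : ℝ≥0∞}
    (h : ∀ i ≤ k, Anorm κ p (iteratedFDeriv ℝ i f) ^ p ≤ M) :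
    Bnorm d k κ p f ≤ ((k + 1) * M) ^ (1 / p) := by
  refine ENNReal.rpow_le_rpow ?_ (by positivity)
  calc ∑ i ∈ Finset.range (k + 1), Anorm κ p (iteratedFDeriv ℝ i f) ^ p
      ≤ ∑ _i ∈ Finset.range (k + 1), M :=
        Finset.sum_le_sum fun i hi => h i (Finset.mem_range_succ_iff.1 hi)
    _ = (k + 1) * M := by simp

theorem statement6_general (d k : ℕ) (p κ : ℝ) (hp : 1 ≤ p) (hκ : (d : ℝ) ≤ κ)
    (f : E d → ℂ) (hf : ContDiff ℝ k f)
    (hfin : ∀ i ≤ k, Anorm κ p (iteratedFDeriv ℝ i f) < ⊤)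
    (ε : ℝ) (hε : 0 < ε) :
    ∃ g : E d → ℂ, ContDiff ℝ k g ∧ HasCompactSupport g ∧
      Bnorm d k κ p (f - g) ≤ ENNReal.ofReal ε := by
  have hp0 : 0 < p := zero_lt_one.trans_le hp
  set S : E d → ℝ := fun x => ∑ j ∈ Finset.range (k + 1), ‖iteratedFDeriv ℝ j f x‖
  have hS : Continuous S := continuous_finsetSum _ fun j hj =>
    (hf.continuous_iteratedFDeriv (mod_cast Finset.mem_range_succ_iff.1 hj)).norm
  set u : E d → ℝ≥0∞ := fun x => ENNReal.ofReal (S x ^ p)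
  have hu : ∫⁻ z, ballSup u 1 z ≠ ∞ :=
    (lintegral_ballSup_sum_norm_iteratedFDeriv_lt_top hp hf hfin 1).ne
  have hu_meas : Measurable (ballSup u 1) := (ENNReal.continuous_ofReal.comp
    (hS.rpow_const fun _ => Or.inr hp0.le)).lowerSemicontinuous.ballSup 1 |>.measurable
  obtain ⟨C, hcut⟩ := exists_cutoff_iteratedFDeriv_sub_le hf
  have htail : Tendsto (fun r => ((k + 1) * (ENNReal.ofReal (C ^ p) *
      ∫⁻ z in (closedBall 0 r)ᶜ, ballSup u 1 z)) ^ (1 / p)) atTop (𝓝 0) := by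
    have := (ENNReal.Tendsto.const_mul (a := k + 1) (ENNReal.Tendsto.const_mul
      (a := ENNReal.ofReal (C ^ p))
      (tendsto_setLIntegral_compl_closedBall hu_meas.aemeasurable hu 0)
      (Or.inr ENNReal.ofReal_ne_top)) (Or.inr (by simp))).ennrpow_const (1 / p)
    rwa [mul_zero, mul_zero, ENNReal.zero_rpow_of_pos (one_div_pos.2 hp0)] at this
  obtain ⟨r, hr, hr0⟩ := ((htail.eventually_lt_const (ENNReal.ofReal_pos.2 hε)).and
    (eventually_ge_atTop 0)).exists
  obtain ⟨g, hg, hgc, hfg⟩ := hcut (r + 2) (by linarith)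
  refine ⟨g, hg, hgc, (Bnorm_le_of_forall_le hp0.le fun i hi => ?_).trans hr.le⟩
  exact Anorm_rpow_le_mul_setLIntegral_compl hp0 (by simpa using hκ)
    ((hf.sub hg).continuous_iteratedFDeriv (mod_cast hi)) (fun x => by positivity)
    (fun x => (hfg i hi x).1) fun x hx => (hfg i hi x).2 (by linarith)

/-- Compactly supported `C^k` functions are dense in `B^{k,κ,p}`. -/
theorem statement6 (d k : ℕ) (hd : 1 ≤ d) (p κ : ℝ) (hp : 1 ≤ p) (hκ : (d : ℝ) ≤ κ)
    (f : E d → ℂ) (hf : ContDiff ℝ k f)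
    (hfin : ∀ i ≤ k, Anorm κ p (iteratedFDeriv ℝ i f) < ⊤)
    (ε : ℝ) (hε : 0 < ε) :
    ∃ g : E d → ℂ, ContDiff ℝ k g ∧ HasCompactSupport g ∧
      Bnorm d k κ p (f - g) ≤ ENNReal.ofReal ε :=
  statement6_general d k p κ hp hκ f hf hfin ε hε
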